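/- If a simplicial set X is lower 2-Segal, then for every n ≥ 0 and every 0 ≤ i ≤ n, the square with top s_i : X_{n+1} → X_{n+2}, left d_{n+1} : X_{n+1} → X_n, right d_{n+2} : X_{n+2} → X_{n+1}, bottom s_i : X_n → X_{n+1} is a pullback of sets. -/

import Mathlib

open CategoryTheory Simplicial

universe u

/-- A commuting square of sets (top `f`, left `g`, right `h`, bottom `k`) is a pullback
if the canonical map to the fiber product is a bijection. -/
def IsPullbackSet {A B C D : Type u} (f : A → B) (g : A → C) (h : B → D) (k : C → D) : Prop :=
  (∀ a, h (f a) = k (g a)) ∧ ∀ (b : B) (c : C), h b = k c → ∃! a : A, f a = b ∧ g a = c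

/-- The lower 2-Segal condition: for every `n ≥ 2` (here `n = m + 2`) and every `0 < i < n`,
the square with top `d_i : X_{n+1} → X_n`, left `d_{n+1} : X_{n+1} → X_n`,
right `d_n : X_n → X_{n-1}`, bottom `d_i : X_n → X_{n-1}` is a pullback. -/
def LowerTwoSegal (X : SSet.{u}) : Prop :=
  ∀ (m i : ℕ), 0 < i → ∀ h2 : i < m + 2,
    IsPullbackSet
      (fun x => X.δ (⟨i, by omega⟩ : Fin (m + 4)) x)
      (fun x => X.δ (⟨m + 3, by omega⟩ : Fin (m + 4)) x)
      (fun x => X.δ (⟨m + 2, by omega⟩ : Fin (m + 3)) x)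
      (fun x => X.δ (⟨i, by omega⟩ : Fin (m + 3)) x)

/-! If `d_{n+2} b = s_i c`, the lower 2-Segal square at the inner face `d_{i+1}` has the two
lifts `s_{i+1} b` and `s_i b` over the same pair `(b, s_i s_i c)`, so they coincide. Applying
`d_{i+2}` to `s_{i+1} b = s_i b` gives `b = s_i d_{i+1} b`, and `a := d_{i+1} b` is the required
preimage; it is unique because `s_i` has the left inverse `d_{i+1}`. -/

lemma IsPullbackSet.ext {A B C D : Type u} {f : A → B} {g : A → C} {h : B → D} {k : C → D}
    (hp : IsPullbackSet f g h k) {a a' : A} (hf : f a = f a') (hg : g a = g a') : a = a' :=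
  (hp.2 (f a) (g a) (hp.1 a)).unique ⟨rfl, rfl⟩ ⟨hf.symm, hg.symm⟩

namespace SSet

variable (X : SSet.{u})

lemma σ_injective {n : ℕ} (i : Fin (n + 1)) : Function.Injective (X.σ i) :=
  Function.LeftInverse.injective (X.δ_comp_σ_succ_apply i)

lemma δ_last_σ_castSucc {n : ℕ} (i : Fin (n + 1)) (x : X _⦋n + 1⦌) :
    X.δ (Fin.last (n + 2)) (X.σ i.castSucc x) = X.σ i (X.δ (Fin.last (n + 1)) x) :=
  X.δ_comp_σ_of_gt_apply (Fin.castSucc_lt_last i) x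

lemma σ_δ_succ_eq_self_of_σ_succ_eq {n : ℕ} {i : Fin (n + 1)} {b : X _⦋n + 1⦌}
    (hb : X.σ i.succ b = X.σ i.castSucc b) : X.σ i (X.δ i.succ b) = b :=
  calc X.σ i (X.δ i.succ b) = X.δ i.succ.succ (X.σ i.castSucc b) :=
        (X.δ_comp_σ_of_gt_apply Fin.castSucc_lt_succ b).symm
    _ = X.δ i.succ.succ (X.σ i.succ b) := by rw [hb]
    _ = b := X.δ_comp_σ_succ_apply i.succ b

end SSet

namespace LowerTwoSegal

lemma σ_succ_eq_σ_castSucc {X : SSet.{u}} (hX : LowerTwoSegal X) {n : ℕ} (i : Fin (n + 1))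
    {b : X _⦋n + 2⦌} {c : X _⦋n⦌} (hbc : X.δ (Fin.last (n + 2)) b = X.σ i c) :
    X.σ i.castSucc.succ b = X.σ i.castSucc.castSucc b := by
  refine (hX n (i + 1) i.succ_pos (by omega)).ext ?_ ?_
  · exact (X.δ_comp_σ_self_apply i.castSucc.succ b).trans
      (X.δ_comp_σ_succ_apply i.castSucc.castSucc b).symm
  · calc X.δ (Fin.last (n + 3)) (X.σ i.succ.castSucc b)
        = X.σ i.succ (X.σ i c) := by rw [X.δ_last_σ_castSucc, hbc]
      _ = X.σ i.castSucc (X.σ i c) := (X.σ_comp_σ_apply le_rfl c).symm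
      _ = X.δ (Fin.last (n + 3)) (X.σ i.castSucc.castSucc b) := by
          rw [X.δ_last_σ_castSucc, hbc]

lemma isPullbackSet_σ_δ_last {X : SSet.{u}} (hX : LowerTwoSegal X) {n : ℕ} (i : Fin (n + 1)) :
    IsPullbackSet (fun x => X.σ i.castSucc x) (fun x => X.δ (Fin.last (n + 1)) x)
      (fun x => X.δ (Fin.last (n + 2)) x) (fun x => X.σ i x) := by
  refine ⟨X.δ_last_σ_castSucc i, fun b c hbc => ?_⟩
  have hb := X.σ_δ_succ_eq_self_of_σ_succ_eq (hX.σ_succ_eq_σ_castSucc i hbc)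
  refine ⟨X.δ i.castSucc.succ b, ⟨hb, ?_⟩,
    fun a ha => X.σ_injective _ (ha.1.trans hb.symm)⟩
  calc X.δ (Fin.last (n + 1)) (X.δ i.castSucc.succ b)
      = X.δ i.succ (X.δ (Fin.last (n + 2)) b) := (X.δ_comp_δ_apply (Fin.le_last i.succ) b).symm
    _ = X.δ i.succ (X.σ i c) := congrArg (X.δ i.succ) hbc
    _ = c := X.δ_comp_σ_succ_apply i c

end LowerTwoSegal

/-- If `X` is lower 2-Segal, then for every `n ≥ 0` and every `0 ≤ i ≤ n`, the square with
top `s_i : X_{n+1} → X_{n+2}`, left `d_{n+1} : X_{n+1} → X_n`,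
right `d_{n+2} : X_{n+2} → X_{n+1}`, bottom `s_i : X_n → X_{n+1}` is a pullback. -/
theorem lowerTwoSegal_degeneracy_square (X : SSet.{u}) (h : LowerTwoSegal X)
    (n i : ℕ) (hi : i ≤ n) :
    IsPullbackSet
      (fun x => X.σ (⟨i, by omega⟩ : Fin (n + 2)) x)
      (fun x => X.δ (⟨n + 1, by omega⟩ : Fin (n + 2)) x)
      (fun x => X.δ (⟨n + 2, by omega⟩ : Fin (n + 3)) x)
      (fun x => X.σ (⟨i, by omega⟩ : Fin (n + 1)) x) :=
  h.isPullbackSet_σ_δ_last ⟨i, by omega⟩
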